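/- Let M be the monoid defined by the presentation with generators a, a⁻¹, b, b⁻¹, h and relations aa⁻¹ = a⁻¹a = bb⁻¹ = b⁻¹b = 1, xh = hx and hxy = hyx for all x,y ∈ {a,a⁻¹,b,b⁻¹}, and h²a = h²a⁻¹ = h²b = h²b⁻¹ = h³ = h². Then the element represented by h² is a two-sided zero element of M. -/

import Mathlib

/-- The five generating letters `a, a⁻¹, b, b⁻¹, h`. -/
inductive L : Type
  | a | a' | b | b' | h
deriving DecidableEq

/-- Words over the five letters. -/
abbrev W : Type := FreeMonoid L

/-- The one-letter word. -/
def gen (x : L) : W := FreeMonoid.of x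

open L in
/-- The defining relations of the monoid `M`. -/
inductive rel : W → W → Prop
  | inv_aa' : rel (gen a * gen a') 1
  | inv_a'a : rel (gen a' * gen a) 1
  | inv_bb' : rel (gen b * gen b') 1
  | inv_b'b : rel (gen b' * gen b) 1
  | comm (x : L) (hx : x ≠ h) : rel (gen x * gen h) (gen h * gen x)
  | swap (x y : L) (hx : x ≠ h) (hy : y ≠ h) :
      rel (gen h * gen x * gen y) (gen h * gen y * gen x)
  | zero (x : L) (hx : x ≠ h) : rel (gen h * gen h * gen x) (gen h * gen h)
  | zero_h : rel (gen h * gen h * gen h) (gen h * gen h)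

/-- The congruence on the free monoid generated by the defining relations. -/
def Mcon : Con W := conGen rel

/-- The monoid `M` defined by the presentation. -/
abbrev M : Type := Mcon.Quotient

/-- The canonical projection from words to elements of `M`. -/
def π : W →* M := Mcon.mk'

theorem FreeMonoid.absorbs_map_of_absorbs_map_of {α N : Type*} [Monoid N] (f : FreeMonoid α →* N)
    {z : N} (hright : ∀ x, z * f (of x) = z) (hleft : ∀ x, f (of x) * z = z) (w : FreeMonoid α) :
    z * f w = z ∧ f w * z = z := by
  induction w using FreeMonoid.inductionOn' with
  | one => simp
  | of_mul x w ih =>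
    rw [map_mul, ← mul_assoc, hright, mul_assoc, ih.2, hleft]
    exact ⟨ih.1, rfl⟩

theorem π_surjective : Function.Surjective π :=
  Con.mk'_surjective

theorem π_eq_of_rel {x y : W} (hxy : rel x y) : π x = π y :=
  Quotient.sound (ConGen.Rel.of _ _ hxy)

theorem hsq_mul_gen (x : L) : π (gen L.h * gen L.h) * π (gen x) = π (gen L.h * gen L.h) := by
  rw [← map_mul]
  by_cases hx : x = L.h
  · subst hx
    exact π_eq_of_rel rel.zero_h
  · exact π_eq_of_rel (rel.zero x hx)

theorem gen_mul_hsq (x : L) : π (gen x) * π (gen L.h * gen L.h) = π (gen L.h * gen L.h) := by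
  by_cases hx : x = L.h
  · subst hx
    rw [← map_mul, ← mul_assoc]
    exact π_eq_of_rel rel.zero_h
  · have hcomm : Commute (π (gen x)) (π (gen L.h)) := by
      rw [Commute, SemiconjBy, ← map_mul, ← map_mul]
      exact π_eq_of_rel (rel.comm x hx)
    rw [map_mul, (hcomm.mul_right hcomm).eq, ← map_mul]
    exact hsq_mul_gen x

/-- The element represented by `h²` is a two-sided zero of `M`. -/
theorem stmt_13 : ∀ m : M,
    π (gen L.h * gen L.h) * m = π (gen L.h * gen L.h) ∧
    m * π (gen L.h * gen L.h) = π (gen L.h * gen L.h) := by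
  intro m
  obtain ⟨w, rfl⟩ := π_surjective m
  exact FreeMonoid.absorbs_map_of_absorbs_map_of π hsq_mul_gen gen_mul_hsq w
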